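/- Let k > 0 and s = 1 + 1/k, and let f : ℂ → ℂ be given on the open unit disk D. Suppose there exist functions g₀, ..., g_{N-1} holomorphic on D such that f(z) = Σ_{p=0}^{N-1} g_p(z)·(conj z)^p for z ∈ D, and suppose each g_p satisfies sup_{z∈D} |g_p^(n)(z)| ≤ B^(n+1)·n^(s·n) for all n ∈ ℕ (constant B > 0, convention 0^0 = 1). Then there is a constant B' > 0 such that for all pairs (l, m) ∈ ℕ²: sup_{z∈D} |∂^(l+m) f / ∂z^l ∂z̄^m (z)| ≤ B'^(l+m+1)·(l+m)^(s·(l+m)). -/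

import Mathlib

open Complex Metric Real

/-- The Wirtinger operator `∂/∂z = (1/2)(∂/∂x - i ∂/∂y)` on functions `ℂ → ℂ`. -/
noncomputable def dz (f : ℂ → ℂ) : ℂ → ℂ :=
  fun z => (fderiv ℝ f z 1 - Complex.I * fderiv ℝ f z Complex.I) / 2

/-- The Wirtinger operator `∂/∂z̄ = (1/2)(∂/∂x + i ∂/∂y)` on functions `ℂ → ℂ`. -/
noncomputable def dzbar (f : ℂ → ℂ) : ℂ → ℂ :=
  fun z => (fderiv ℝ f z 1 + Complex.I * fderiv ℝ f z Complex.I) / 2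

open ComplexConjugate Set Topology

/-!
The Wirtinger derivatives of `f` at `z` are the coordinates of its real derivative in the basis
`(id, conj)`. For a sum `∑ c p w * conj w ^ e p` with holomorphic `c p` these coordinates are
`∑ deriv (c p) z * conj z ^ e p` and `∑ e p * c p z * conj z ^ (e p - 1)`, so on the disk
`dz^[l] (dzbar^[m] f) = ∑ p.descFactorial m * deriv^[l] (g p) * conj ^ (p - m)`. Since `‖z‖ < 1`
and `p.descFactorial m ≤ N ^ m`, the Gevrey bound on the `g p` passes to `f` with
`B' = (N + 1) * (B + 1)`, because `n ↦ n ^ (s * n)` is monotone for `s ≥ 0`.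
-/

lemma HasFDerivAt.dz_eq {f : ℂ → ℂ} {a b z : ℂ}
    (h : HasFDerivAt f (a • (1 : ℂ →L[ℝ] ℂ) + b • (conjCLE : ℂ →L[ℝ] ℂ)) z) :
    dz f z = a := by
  have h1 : fderiv ℝ f z 1 = a + b := by simp [h.fderiv]
  have hI : fderiv ℝ f z I = (a - b) * I := by simp [h.fderiv]; ring
  simp only [dz, h1, hI]
  linear_combination (b - a) / 2 * I_sq

lemma HasFDerivAt.dzbar_eq {f : ℂ → ℂ} {a b z : ℂ}
    (h : HasFDerivAt f (a • (1 : ℂ →L[ℝ] ℂ) + b • (conjCLE : ℂ →L[ℝ] ℂ)) z) :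
    dzbar f z = b := by
  have h1 : fderiv ℝ f z 1 = a + b := by simp [h.fderiv]
  have hI : fderiv ℝ f z I = (a - b) * I := by simp [h.fderiv]; ring
  simp only [dzbar, h1, hI]
  linear_combination (a - b) / 2 * I_sq

lemma Filter.EventuallyEq.dz_eq {f₁ f₂ : ℂ → ℂ} {z : ℂ} (h : f₁ =ᶠ[𝓝 z] f₂) :
    dz f₁ z = dz f₂ z := by
  simp only [dz, h.fderiv_eq]

lemma Filter.EventuallyEq.dzbar_eq {f₁ f₂ : ℂ → ℂ} {z : ℂ} (h : f₁ =ᶠ[𝓝 z] f₂) :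
    dzbar f₁ z = dzbar f₂ z := by
  simp only [dzbar, h.fderiv_eq]

lemma HasDerivAt.hasFDerivAt_mul_conj_pow {u : ℂ → ℂ} {u' z : ℂ} (hu : HasDerivAt u u' z)
    (j : ℕ) :
    HasFDerivAt (fun w => u w * conj w ^ j)
      ((u' * conj z ^ j) • (1 : ℂ →L[ℝ] ℂ) +
        (j * u z * conj z ^ (j - 1)) • (conjCLE : ℂ →L[ℝ] ℂ)) z := by
  have hconj := ((hasDerivAt_pow j (conj z)).hasFDerivAt.restrictScalars ℝ).comp z
    (conjCLE : ℂ →L[ℝ] ℂ).hasFDerivAt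
  refine ((hu.hasFDerivAt.restrictScalars ℝ).mul hconj).congr_fderiv ?_
  ext v
  simp only [add_apply, smul_apply,
    ContinuousLinearMap.comp_apply, ContinuousLinearMap.coe_restrictScalars',
    ContinuousLinearMap.toSpanSingleton_apply, one_apply_eq_self,
    Function.comp_apply, ContinuousLinearEquiv.coe_coe, conjCLE_apply, smul_eq_mul]
  ring

section PolyanalyticSum

variable {ι : Type*} {s : Finset ι} {a : ι → ℂ} {c : ι → ℂ → ℂ} {e : ι → ℕ}

lemma hasFDerivAt_sum_mul_conj_pow {z : ℂ} (hc : ∀ p ∈ s, DifferentiableAt ℂ (c p) z) :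
    HasFDerivAt (fun w => ∑ p ∈ s, c p w * conj w ^ e p)
      ((∑ p ∈ s, deriv (c p) z * conj z ^ e p) • (1 : ℂ →L[ℝ] ℂ) +
        (∑ p ∈ s, e p * c p z * conj z ^ (e p - 1)) • (conjCLE : ℂ →L[ℝ] ℂ)) z := by
  refine (HasFDerivAt.fun_sum fun p hp =>
    (hc p hp).hasDerivAt.hasFDerivAt_mul_conj_pow (e p)).congr_fderiv ?_
  ext v
  simp [Finset.sum_add_distrib, Finset.sum_mul]

variable {U : Set ℂ} {F : ℂ → ℂ}

lemma dz_eqOn_sum_mul_conj_pow (hU : IsOpen U) (hc : ∀ p ∈ s, DifferentiableOn ℂ (c p) U)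
    (hF : EqOn F (fun w => ∑ p ∈ s, a p * c p w * conj w ^ e p) U) :
    EqOn (dz F) (fun w => ∑ p ∈ s, a p * deriv (c p) w * conj w ^ e p) U := by
  intro z hz
  have hdiff : ∀ p ∈ s, DifferentiableAt ℂ (c p) z :=
    fun p hp => (hc p hp).differentiableAt (hU.mem_nhds hz)
  rw [(hF.eventuallyEq_of_mem (hU.mem_nhds hz)).dz_eq,
    (hasFDerivAt_sum_mul_conj_pow (c := fun p w => a p * c p w)
      fun p hp => (hdiff p hp).const_mul _).dz_eq]
  exact Finset.sum_congr rfl fun p hp => by rw [deriv_const_mul _ (hdiff p hp)]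

lemma dzbar_eqOn_sum_mul_conj_pow (hU : IsOpen U) (hc : ∀ p ∈ s, DifferentiableOn ℂ (c p) U)
    (hF : EqOn F (fun w => ∑ p ∈ s, c p w * conj w ^ e p) U) :
    EqOn (dzbar F) (fun w => ∑ p ∈ s, e p * c p w * conj w ^ (e p - 1)) U := by
  intro z hz
  rw [(hF.eventuallyEq_of_mem (hU.mem_nhds hz)).dzbar_eq,
    (hasFDerivAt_sum_mul_conj_pow fun p hp => (hc p hp).differentiableAt (hU.mem_nhds hz)).dzbar_eq]

end PolyanalyticSum

lemma differentiableOn_iterate_deriv {U : Set ℂ} {f : ℂ → ℂ} (hf : DifferentiableOn ℂ f U)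
    (hU : IsOpen U) (l : ℕ) : DifferentiableOn ℂ (deriv^[l] f) U := by
  induction l with
  | zero => exact hf
  | succ l ih => rw [Function.iterate_succ_apply']; exact ih.deriv hU

section Iterates

variable {U : Set ℂ} {s : Finset ℕ} {g : ℕ → ℂ → ℂ} {f : ℂ → ℂ}

-- For `m > p` the exponent `p - m` truncates to `0`, harmlessly: then `p.descFactorial m = 0`.
lemma dzbar_iterate_eqOn (hU : IsOpen U) (hg : ∀ p ∈ s, DifferentiableOn ℂ (g p) U)
    (hf : EqOn f (fun w => ∑ p ∈ s, g p w * conj w ^ p) U) (m : ℕ) :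
    EqOn (dzbar^[m] f)
      (fun w => ∑ p ∈ s, (p.descFactorial m : ℂ) * g p w * conj w ^ (p - m)) U := by
  induction m with
  | zero => simpa using hf
  | succ m ih =>
    rw [Function.iterate_succ']
    refine (dzbar_eqOn_sum_mul_conj_pow hU (fun p hp => (hg p hp).const_mul _) ih).trans
      fun w _ => Finset.sum_congr rfl fun p _ => ?_
    rw [Nat.descFactorial_succ, Nat.sub_sub]
    push_cast
    ring

lemma dz_iterate_dzbar_iterate_eqOn (hU : IsOpen U) (hg : ∀ p ∈ s, DifferentiableOn ℂ (g p) U)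
    (hf : EqOn f (fun w => ∑ p ∈ s, g p w * conj w ^ p) U) (l m : ℕ) :
    EqOn (dz^[l] (dzbar^[m] f))
      (fun w => ∑ p ∈ s, (p.descFactorial m : ℂ) * deriv^[l] (g p) w * conj w ^ (p - m)) U := by
  induction l with
  | zero => exact dzbar_iterate_eqOn hU hg hf m
  | succ l ih =>
    rw [Function.iterate_succ']
    refine (dz_eqOn_sum_mul_conj_pow hU
      (fun p hp => differentiableOn_iterate_deriv (hg p hp) hU l) ih).trans fun w _ => ?_
    simp only [Function.iterate_succ_apply']

end Iterates

lemma monotone_natCast_rpow_mul_self {s : ℝ} (hs : 0 ≤ s) :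
    Monotone fun n : ℕ => (n : ℝ) ^ (s * n) := by
  intro a b hab
  rcases Nat.eq_zero_or_pos a with rfl | ha
  · rcases Nat.eq_zero_or_pos b with rfl | hb
    · rfl
    · simpa using Real.one_le_rpow (by exact_mod_cast hb) (by positivity)
  · calc (a : ℝ) ^ (s * a) ≤ (b : ℝ) ^ (s * a) := by gcongr
      _ ≤ (b : ℝ) ^ (s * b) := by
        gcongr
        exact_mod_cast ha.trans_le hab

lemma pow_mul_pow_le_mul_add_one_pow {a b : ℝ} (ha : 0 ≤ a) (hb : 0 ≤ b) {i j n : ℕ}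
    (hi : i ≤ n) (hj : j ≤ n) : a ^ i * b ^ j ≤ ((a + 1) * (b + 1)) ^ n := by
  rw [mul_pow]
  gcongr
  · calc a ^ i ≤ (a + 1) ^ i := by gcongr; linarith
      _ ≤ (a + 1) ^ n := pow_le_pow_right₀ (by linarith) hi
  · calc b ^ j ≤ (b + 1) ^ j := by gcongr; linarith
      _ ≤ (b + 1) ^ n := pow_le_pow_right₀ (by linarith) hj

lemma norm_descFactorial_mul_mul_conj_pow_le {p m N : ℕ} (hp : p < N) (w : ℂ) {z : ℂ}
    (hz : ‖z‖ ≤ 1) : ‖(p.descFactorial m : ℂ) * w * conj z ^ (p - m)‖ ≤ N ^ m * ‖w‖ := by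
  rw [norm_mul, norm_mul, norm_pow, Complex.norm_natCast, RCLike.norm_conj]
  calc (p.descFactorial m : ℝ) * ‖w‖ * ‖z‖ ^ (p - m) ≤ N ^ m * ‖w‖ * 1 := by
        gcongr
        · exact_mod_cast (Nat.descFactorial_le_pow p m).trans (Nat.pow_le_pow_left hp.le m)
        · exact pow_le_one₀ (norm_nonneg z) hz
    _ = N ^ m * ‖w‖ := mul_one _

theorem stmt19_general (k : ℝ) (hk : 0 < k) (N : ℕ) (f : ℂ → ℂ) (g : ℕ → ℂ → ℂ)
    (hg : ∀ p < N, DifferentiableOn ℂ (g p) (Metric.ball (0 : ℂ) 1))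
    (hf : ∀ z ∈ Metric.ball (0 : ℂ) 1,
      f z = ∑ p ∈ Finset.range N, g p z * (starRingEnd ℂ z) ^ p)
    (B : ℝ) (hB : 0 < B)
    (hgder : ∀ p < N, ∀ n : ℕ, ∀ z ∈ Metric.ball (0 : ℂ) 1,
      ‖iteratedDerivWithin n (g p) (Metric.ball (0 : ℂ) 1) z‖ ≤
        B ^ (n + 1) * (n : ℝ) ^ ((1 + 1 / k) * n)) :
    ∃ B' : ℝ, 0 < B' ∧ ∀ l m : ℕ, ∀ z ∈ Metric.ball (0 : ℂ) 1,
      ‖dz^[l] (dzbar^[m] f) z‖ ≤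
        B' ^ (l + m + 1) * ((l + m : ℕ) : ℝ) ^ ((1 + 1 / k) * (l + m)) := by
  set s := 1 + 1 / k
  have hformula := dz_iterate_dzbar_iterate_eqOn isOpen_ball
    (fun p hp => hg p (Finset.mem_range.mp hp)) hf
  have hderiv : ∀ p < N, ∀ l, ∀ z ∈ ball (0 : ℂ) 1,
      ‖deriv^[l] (g p) z‖ ≤ B ^ (l + 1) * (l : ℝ) ^ (s * l) := fun p hp l z hz => by
    rw [← iteratedDerivWithin_of_isOpen_eq_iterate isOpen_ball hz]
    exact hgder p hp l z hz
  refine ⟨(N + 1) * (B + 1), by positivity, fun l m z hz => ?_⟩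
  have hz1 : ‖z‖ ≤ 1 := (mem_ball_zero_iff.mp hz).le
  rw [hformula l m hz]
  calc _ ≤ ∑ p ∈ Finset.range N, N ^ m * (B ^ (l + 1) * (l : ℝ) ^ (s * l)) :=
        (norm_sum_le _ _).trans <| Finset.sum_le_sum fun p hp =>
          (norm_descFactorial_mul_mul_conj_pow_le (Finset.mem_range.mp hp) _ hz1).trans <| by
            gcongr
            exact hderiv p (Finset.mem_range.mp hp) l z hz
    _ = ((N : ℝ) ^ (m + 1) * B ^ (l + 1)) * (l : ℝ) ^ (s * l) := by
        rw [Finset.sum_const, Finset.card_range, nsmul_eq_mul]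
        ring
    _ ≤ ((N + 1) * (B + 1)) ^ (l + m + 1) * ((l + m : ℕ) : ℝ) ^ (s * (l + m)) := by
        gcongr
        · exact pow_mul_pow_le_mul_add_one_pow (by positivity) hB.le (by omega) (by omega)
        · exact_mod_cast monotone_natCast_rpow_mul_self (by positivity) (Nat.le_add_right l m)

theorem stmt19 (k : ℝ) (hk : 0 < k) (N : ℕ) (hN : 1 ≤ N) (f : ℂ → ℂ) (g : ℕ → ℂ → ℂ)
    (hg : ∀ p < N, DifferentiableOn ℂ (g p) (Metric.ball (0 : ℂ) 1))
    (hf : ∀ z ∈ Metric.ball (0 : ℂ) 1,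
      f z = ∑ p ∈ Finset.range N, g p z * (starRingEnd ℂ z) ^ p)
    (B : ℝ) (hB : 0 < B)
    (hgder : ∀ p < N, ∀ n : ℕ, ∀ z ∈ Metric.ball (0 : ℂ) 1,
      ‖iteratedDerivWithin n (g p) (Metric.ball (0 : ℂ) 1) z‖ ≤
        B ^ (n + 1) * (n : ℝ) ^ ((1 + 1 / k) * n)) :
    ∃ B' : ℝ, 0 < B' ∧ ∀ l m : ℕ, ∀ z ∈ Metric.ball (0 : ℂ) 1,
      ‖dz^[l] (dzbar^[m] f) z‖ ≤
        B' ^ (l + m + 1) * ((l + m : ℕ) : ℝ) ^ ((1 + 1 / k) * (l + m)) :=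
  stmt19_general k hk N f g hg hf B hB hgder
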